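/- T_H semantically entails H⁺ ≠ H⁻. -/

import Mathlib

/-!
By its axiom, `H⁺ = A[A]`; this puts `⟨A, H⁺⟩` into `A`, which in turn means `H⁺ ∈ H⁺`.
Likewise `H⁻ = B[B]`. If `H⁻ ∈ H⁻` held, then `⟨B, H⁻⟩ ∈ B`, and since Kuratowski pairs are
injective, that would force `H⁻ ≠ B[B]`, which is false. So `H⁺` is a member of itself and
`H⁻` is not.
-/

open FirstOrder FirstOrder.Language

namespace CoRussellParadox

/-- The language `L'` with a single binary relation symbol `∈` and four constant
symbols `A`, `B`, `H⁺`, `H⁻` (coded as `Fin 4`). -/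
def L : Language :=
  ⟨fun n => match n with | 0 => Fin 4 | _ => Empty,
   fun n => match n with | 2 => Unit | _ => Empty⟩

/-- The membership relation symbol. -/
def memRel : L.Relations 2 := Unit.unit

/-- The constant symbol `A`. -/
def cA : L.Constants := (0 : Fin 4)
/-- The constant symbol `B`. -/
def cB : L.Constants := (1 : Fin 4)
/-- The constant symbol `H⁺`. -/
def cHp : L.Constants := (2 : Fin 4)
/-- The constant symbol `H⁻`. -/
def cHm : L.Constants := (3 : Fin 4)

/-- `memF t₁ t₂` is the atomic formula `t₁ ∈ t₂`. -/
def memF {n : ℕ} (t₁ t₂ : L.Term (Empty ⊕ Fin n)) : L.BoundedFormula Empty n :=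
  memRel.boundedFormula₂ t₁ t₂

/-- Inclusion of a term in context `n` into the larger context `n + k`. -/
def tl {n : ℕ} (k : ℕ) (t : L.Term (Empty ⊕ Fin n)) : L.Term (Empty ⊕ Fin (n + k)) :=
  t.relabel (Sum.map id (Fin.castAdd k))

/-- `z = ⟨a,b⟩` (Kuratowski pair), as the formula
`∃p∃q(∀x(x∈p ↔ x=a) ∧ ∀x(x∈q ↔ (x=a ∨ x=b)) ∧ ∀x(x∈z ↔ (x=p ∨ x=q)))`. -/
def isPairF {n : ℕ} (z a b : L.Term (Empty ⊕ Fin n)) : L.BoundedFormula Empty n :=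
  ∃' ∃' (
    (∀' (memF (&⟨n + 2, by omega⟩) (&⟨n, by omega⟩) ⇔
        ((&(⟨n + 2, by omega⟩ : Fin (n + 3))) =' tl 3 a))) ⊓
    (∀' (memF (&⟨n + 2, by omega⟩) (&⟨n + 1, by omega⟩) ⇔
        (((&(⟨n + 2, by omega⟩ : Fin (n + 3))) =' tl 3 a) ⊔
         ((&(⟨n + 2, by omega⟩ : Fin (n + 3))) =' tl 3 b)))) ⊓
    (∀' (memF (&⟨n + 2, by omega⟩) (tl 3 z) ⇔
        (((&(⟨n + 2, by omega⟩ : Fin (n + 3))) =' (&⟨n, by omega⟩)) ⊔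
         ((&(⟨n + 2, by omega⟩ : Fin (n + 3))) =' (&⟨n + 1, by omega⟩))))))

/-- Extensionality: `∀y∀z(∀x(x∈y ↔ x∈z) → y=z)`. -/
def extAx : L.Sentence :=
  ∀' ∀' ((∀' (memF (&2) (&0) ⇔ memF (&2) (&1))) ⟹ ((&0) =' (&1)))

/-- Pairing: `∀a∀b∃y∀x(x∈y ↔ (x=a ∨ x=b))`. -/
def pairAx : L.Sentence :=
  ∀' ∀' ∃' ∀' (memF (&3) (&2) ⇔ (((&3) =' (&0)) ⊔ ((&3) =' (&1))))

/-- Extracting: `∀a∃y∀x(x∈y ↔ ∃z(z=⟨a,x⟩ ∧ z∈a))`. -/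
def extractAx : L.Sentence :=
  ∀' ∃' ∀' (memF (&2) (&1) ⇔ ∃' (isPairF (&3) (&0) (&2) ⊓ memF (&3) (&0)))

/-- `w = v[v]`, i.e. `∀u(u∈w ↔ ∃z(z=⟨v,u⟩ ∧ z∈v))`, here with `v = &1`, `w = &2`
in context `3` (as used in the axioms for `A` and `B`). -/
def wEqExtractF : L.BoundedFormula Empty 3 :=
  ∀' (memF (&3) (&2) ⇔ ∃' (isPairF (&4) (&1) (&3) ⊓ memF (&4) (&1)))

/-- The axiom `∀x(x∈A ↔ ∃v∃w(x=⟨v,w⟩ ∧ (w∈w ∨ w=v[v])))`. -/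
def axA : L.Sentence :=
  ∀' (memF (&0) (Constants.term cA) ⇔
    ∃' ∃' (isPairF (&0) (&1) (&2) ⊓ (memF (&2) (&2) ⊔ wEqExtractF)))

/-- The axiom `∀x(x∈B ↔ ∃v∃w(x=⟨v,w⟩ ∧ (w∈w ∧ ¬w=v[v])))`. -/
def axB : L.Sentence :=
  ∀' (memF (&0) (Constants.term cB) ⇔
    ∃' ∃' (isPairF (&0) (&1) (&2) ⊓ (memF (&2) (&2) ⊓ ∼wEqExtractF)))

/-- The axiom `∀x(x∈H⁺ ↔ ∃z(z=⟨A,x⟩ ∧ z∈A))`. -/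
def axHp : L.Sentence :=
  ∀' (memF (&0) (Constants.term cHp) ⇔
    ∃' (isPairF (&1) (Constants.term cA) (&0) ⊓ memF (&1) (Constants.term cA)))

/-- The axiom `∀x(x∈H⁻ ↔ ∃z(z=⟨B,x⟩ ∧ z∈B))`. -/
def axHm : L.Sentence :=
  ∀' (memF (&0) (Constants.term cHm) ⇔
    ∃' (isPairF (&1) (Constants.term cB) (&0) ⊓ memF (&1) (Constants.term cB)))

/-- The theory `T_H`: extensionality, pairing, extracting, and the defining axioms
of `A`, `B`, `H⁺` and `H⁻`. -/
def TH : L.Theory := {extAx, pairAx, extractAx, axA, axB, axHp, axHm}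


section Model

variable {M : Type*} [L.Structure M]

def mem (x y : M) : Prop := Structure.RelMap memRel ![x, y]

local infix:50 " ∈ᴹ " => mem

def memSet (y : M) : Set M := {x | x ∈ᴹ y}

def IsKPair (z a b : M) : Prop :=
  ∃ p q : M, memSet p = {a} ∧ memSet q = {a, b} ∧ memSet z = {p, q}

/-- `w = v[v]` in the notation of the paper. -/
def IsSelfExtract (w v : M) : Prop :=
  memSet w = {u | ∃ z, IsKPair z v u ∧ z ∈ᴹ v}

lemma realize_pairAx : M ⊨ pairAx ↔ ∀ a b : M, ∃ y : M, memSet y = {a, b} := by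
  simp [pairAx, memF, Sentence.Realize, Formula.Realize, Fin.snoc, mem, memSet, Set.ext_iff]

lemma realize_axA : M ⊨ axA ↔ ∀ x : M, x ∈ᴹ (cA : M) ↔
    ∃ v w, IsKPair x v w ∧ (w ∈ᴹ w ∨ IsSelfExtract w v) := by
  simp [axA, memF, isPairF, wEqExtractF, tl, Sentence.Realize, Formula.Realize, Fin.snoc,
    mem, memSet, IsSelfExtract, IsKPair, Set.ext_iff, and_assoc]

lemma realize_axB : M ⊨ axB ↔ ∀ x : M, x ∈ᴹ (cB : M) ↔
    ∃ v w, IsKPair x v w ∧ w ∈ᴹ w ∧ ¬IsSelfExtract w v := by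
  simp [axB, memF, isPairF, wEqExtractF, tl, Sentence.Realize, Formula.Realize, Fin.snoc,
    mem, memSet, IsSelfExtract, IsKPair, Set.ext_iff, and_assoc]

lemma realize_axHp : M ⊨ axHp ↔ IsSelfExtract (cHp : M) (cA : M) := by
  simp [axHp, memF, isPairF, tl, Sentence.Realize, Formula.Realize, Fin.snoc, mem, memSet,
    IsSelfExtract, IsKPair, Set.ext_iff, and_assoc]

lemma realize_axHm : M ⊨ axHm ↔ IsSelfExtract (cHm : M) (cB : M) := by
  simp [axHm, memF, isPairF, tl, Sentence.Realize, Formula.Realize, Fin.snoc, mem, memSet,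
    IsSelfExtract, IsKPair, Set.ext_iff, and_assoc]

lemma exists_isKPair (hpair : ∀ a b : M, ∃ y : M, memSet y = {a, b}) (a b : M) :
    ∃ z : M, IsKPair z a b := by
  obtain ⟨p, hp⟩ := hpair a a
  obtain ⟨q, hq⟩ := hpair a b
  obtain ⟨z, hz⟩ := hpair p q
  exact ⟨z, p, q, Set.pair_eq_singleton a ▸ hp, hq, hz⟩

lemma IsKPair.inj {z a b a' b' : M} (h : IsKPair z a b) (h' : IsKPair z a' b') :
    a = a' ∧ b = b' := by
  obtain ⟨p, q, hp, hq, hz⟩ := h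
  obtain ⟨p', q', hp', hq', hz'⟩ := h'
  rcases Set.pair_eq_pair_iff.1 (hz.symm.trans hz') with ⟨rfl, rfl⟩ | ⟨rfl, rfl⟩
  · obtain rfl := Set.singleton_injective (hp.symm.trans hp')
    have hbb' : b = b' ∨ a = b' ∧ b = a := by simpa [Set.pair_eq_pair_iff] using hq.symm.trans hq'
    rcases hbb' with rfl | ⟨rfl, rfl⟩ <;> exact ⟨rfl, rfl⟩
  · -- crossed case: `{a} = {a', b'}` and `{a, b} = {a'}`, so all four points coincide
    have h1 := Set.ext_iff.1 (hp.symm.trans hq')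
    have h2 := Set.ext_iff.1 (hq.symm.trans hp')
    have ha' : a' = a := (h1 a').2 (.inl rfl)
    have hb' : b' = a := (h1 b').2 (.inr rfl)
    have hb : b = a' := (h2 b).1 (.inr rfl)
    exact ⟨ha'.symm, hb.trans (ha'.trans hb'.symm)⟩

lemma mem_self_of_isSelfExtract {a h : M} (hpair : ∀ x y : M, ∃ z, IsKPair z x y)
    (ha : ∀ x, x ∈ᴹ a ↔ ∃ v w, IsKPair x v w ∧ (w ∈ᴹ w ∨ IsSelfExtract w v))
    (hh : IsSelfExtract h a) : h ∈ᴹ h := by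
  obtain ⟨z, hz⟩ := hpair a h
  have hza : z ∈ᴹ a := (ha z).2 ⟨a, h, hz, .inr hh⟩
  change h ∈ memSet h
  rw [hh]
  exact ⟨z, hz, hza⟩

lemma not_mem_self_of_isSelfExtract {b h : M}
    (hb : ∀ x, x ∈ᴹ b ↔ ∃ v w, IsKPair x v w ∧ w ∈ᴹ w ∧ ¬IsSelfExtract w v)
    (hh : IsSelfExtract h b) : ¬h ∈ᴹ h := by
  intro hmem
  have hmem' : h ∈ memSet h := hmem
  rw [hh] at hmem'
  obtain ⟨z, hz, hzb⟩ := hmem'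
  obtain ⟨v, w, hz', -, hne⟩ := (hb z).1 hzb
  obtain ⟨rfl, rfl⟩ := hz.inj hz'
  exact hne hh

end Model

/-- `T_H` semantically entails `H⁺ ≠ H⁻`. -/
theorem TH_Hp_ne_Hm :
    TH ⊨ᵇ ((∼((Constants.term cHp : L.Term (Empty ⊕ Fin 0)) =' (Constants.term cHm))) : L.Sentence) := by
  intro M _ _
  have hTH : ∀ φ ∈ TH, M ⊨ φ := fun _ => TH.realize_sentence_of_mem
  have hpair := exists_isKPair (realize_pairAx.1 (hTH _ (by simp [TH])))
  have hA := realize_axA.1 (hTH _ (by simp [TH]))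
  have hB := realize_axB.1 (hTH _ (by simp [TH]))
  have hHp := realize_axHp.1 (hTH _ (by simp [TH]))
  have hHm := realize_axHm.1 (hTH _ (by simp [TH]))
  have hp_mem := mem_self_of_isSelfExtract hpair hA hHp
  have hm_not_mem := not_mem_self_of_isSelfExtract hB hHm
  have hne : (cHp : M) ≠ (cHm : M) := fun h => hm_not_mem (h ▸ hp_mem)
  simpa [Formula.Realize] using hne

end CoRussellParadox
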